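/- There is an absolute constant c such that for every m ≥ 1 and all m×m Boolean matrices A and B, the size of the Chomsky-normal-form grammar G′ (the sum of the lengths of all its productions) is at most c·m²; moreover G′ has at most O(d) more productions and nonterminals than the grammar G it is converted from, where d = ⌈m^(1/3)⌉ (concretely, G′ adds the 3d+6 nonterminals W_ℓ with their 3d+6 productions, the 2d nonterminals X_{j₂+δ}, X_{j₂+2δ} with their 2d productions, and the nonterminal T, replacing the S-rules of G by S → W T and the T-rules). -/

import Mathlib

/- Formalization of (part of) the reduction of Boolean matrix multiplication
to context-free grammar parsing (Lee, "Fast context-free grammar parsing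
requires fast Boolean matrix multiplication"). -/

namespace CFGBMM

/-- Nonterminals of the grammars of the reduction. -/
inductive NT : Type where
  | S : NT                 -- start symbol
  | T : NT                 -- extra symbol of the CNF grammar G'
  | W : NT                 -- derives arbitrary nonempty substrings
  | Wl : ℕ → NT            -- `W_ℓ` of G'
  | X : ℕ → NT             -- `X_ℓ` of G'
  | A : ℕ → ℕ → NT         -- `A_{p,q}`
  | B : ℕ → ℕ → NT         -- `B_{p,q}`
  | C : ℕ → ℕ → NT         -- `C_{p,q}`
deriving DecidableEq

abbrev Sym : Type := Symbol ℕ NT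

/-- `d = ⌈m^(1/3)⌉`. -/
noncomputable def dOf (m : ℕ) : ℕ := ⌈(m : ℝ) ^ ((1 : ℝ) / 3)⌉₊

/-- The substring `w_ℓ ⋯ w_r` of the input string `w = w₁ ⋯ w_{3d+6}`
(in which `w_ℓ` is just the terminal `ℓ`), as a sentential form. -/
def seg (l r : ℕ) : List Sym := (List.range' l (r + 1 - l)).map Symbol.terminal

/-- W-rules of `G`:  `W → w_ℓ W | w_ℓ`  for `1 ≤ ℓ ≤ 3d+6`. -/
def WRules (d : ℕ) : Set (ContextFreeRule ℕ NT) :=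
  {r | ∃ l, 1 ≤ l ∧ l ≤ 3 * d + 6 ∧
    (r = ⟨NT.W, [Symbol.terminal l, Symbol.nonterminal NT.W]⟩ ∨
     r = ⟨NT.W, [Symbol.terminal l]⟩)}

/-- A-rules of `G`:  `A_{i₁,j₁} → w_{i₂} W w_{j₂+δ}`  for each nonzero entry
`a_{ij}` of `A` (here `i₁ = ⌊i/d⌋`, `i₂ = (i mod d) + 2`, `δ = d + 2`). -/
def ARules (m d : ℕ) (a : ℕ → ℕ → ℕ) : Set (ContextFreeRule ℕ NT) :=
  {r | ∃ i j, 1 ≤ i ∧ i ≤ m ∧ 1 ≤ j ∧ j ≤ m ∧ a i j = 1 ∧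
    r = ⟨NT.A (i / d) (j / d),
      [Symbol.terminal (i % d + 2), Symbol.nonterminal NT.W,
       Symbol.terminal (j % d + 2 + (d + 2))]⟩}

/-- B-rules of `G`:  `B_{i₁,j₁} → w_{i₂+1+δ} W w_{j₂+2δ}`  for each nonzero
entry `b_{ij}` of `B`. -/
def BRules (m d : ℕ) (b : ℕ → ℕ → ℕ) : Set (ContextFreeRule ℕ NT) :=
  {r | ∃ i j, 1 ≤ i ∧ i ≤ m ∧ 1 ≤ j ∧ j ≤ m ∧ b i j = 1 ∧
    r = ⟨NT.B (i / d) (j / d),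
      [Symbol.terminal (i % d + 2 + 1 + (d + 2)), Symbol.nonterminal NT.W,
       Symbol.terminal (j % d + 2 + 2 * (d + 2))]⟩}

/-- C-rules:  `C_{p,q} → A_{p,r} B_{r,q}`  for all `0 ≤ p, q, r ≤ d²`. -/
def CRules (d : ℕ) : Set (ContextFreeRule ℕ NT) :=
  {r | ∃ p q t, p ≤ d ^ 2 ∧ q ≤ d ^ 2 ∧ t ≤ d ^ 2 ∧
    r = ⟨NT.C p q, [Symbol.nonterminal (NT.A p t), Symbol.nonterminal (NT.B t q)]⟩}

/-- S-rules of `G`:  `S → W C_{p,q} W`  for all `0 ≤ p, q ≤ d²`. -/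
def SRules (d : ℕ) : Set (ContextFreeRule ℕ NT) :=
  {r | ∃ p q, p ≤ d ^ 2 ∧ q ≤ d ^ 2 ∧
    r = ⟨NT.S, [Symbol.nonterminal NT.W, Symbol.nonterminal (NT.C p q),
      Symbol.nonterminal NT.W]⟩}

/-- The production set of the grammar `G` of the reduction. -/
def RulesG (m d : ℕ) (a b : ℕ → ℕ → ℕ) : Set (ContextFreeRule ℕ NT) :=
  WRules d ∪ ARules m d a ∪ BRules m d b ∪ CRules d ∪ SRules d

/-- W-rules of `G'`:  `W → W_ℓ W | w_ℓ` and `W_ℓ → w_ℓ`  for `1 ≤ ℓ ≤ 3d+6`. -/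
def WRules' (d : ℕ) : Set (ContextFreeRule ℕ NT) :=
  {r | ∃ l, 1 ≤ l ∧ l ≤ 3 * d + 6 ∧
    (r = ⟨NT.W, [Symbol.nonterminal (NT.Wl l), Symbol.nonterminal NT.W]⟩ ∨
     r = ⟨NT.W, [Symbol.terminal l]⟩ ∨
     r = ⟨NT.Wl l, [Symbol.terminal l]⟩)}

/-- A-rules of `G'`:  `A_{i₁,j₁} → W_{i₂} X_{j₂+δ}`  for each nonzero `a_{ij}`. -/
def ARules' (m d : ℕ) (a : ℕ → ℕ → ℕ) : Set (ContextFreeRule ℕ NT) :=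
  {r | ∃ i j, 1 ≤ i ∧ i ≤ m ∧ 1 ≤ j ∧ j ≤ m ∧ a i j = 1 ∧
    r = ⟨NT.A (i / d) (j / d),
      [Symbol.nonterminal (NT.Wl (i % d + 2)),
       Symbol.nonterminal (NT.X (j % d + 2 + (d + 2)))]⟩}

/-- X-rules of `G'` (first group):  `X_{j₂+δ} → W W_{j₂+δ}`  for `2 ≤ j₂ ≤ d+1`. -/
def XRules₁ (d : ℕ) : Set (ContextFreeRule ℕ NT) :=
  {r | ∃ j₂, 2 ≤ j₂ ∧ j₂ ≤ d + 1 ∧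
    r = ⟨NT.X (j₂ + (d + 2)),
      [Symbol.nonterminal NT.W, Symbol.nonterminal (NT.Wl (j₂ + (d + 2)))]⟩}

/-- B-rules of `G'`:  `B_{i₁,j₁} → W_{i₂+1+δ} X_{j₂+2δ}`  for each nonzero `b_{ij}`. -/
def BRules' (m d : ℕ) (b : ℕ → ℕ → ℕ) : Set (ContextFreeRule ℕ NT) :=
  {r | ∃ i j, 1 ≤ i ∧ i ≤ m ∧ 1 ≤ j ∧ j ≤ m ∧ b i j = 1 ∧
    r = ⟨NT.B (i / d) (j / d),
      [Symbol.nonterminal (NT.Wl (i % d + 2 + 1 + (d + 2))),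
       Symbol.nonterminal (NT.X (j % d + 2 + 2 * (d + 2)))]⟩}

/-- X-rules of `G'` (second group):  `X_{j₂+2δ} → W W_{j₂+2δ}`  for `2 ≤ j₂ ≤ d+1`. -/
def XRules₂ (d : ℕ) : Set (ContextFreeRule ℕ NT) :=
  {r | ∃ j₂, 2 ≤ j₂ ∧ j₂ ≤ d + 1 ∧
    r = ⟨NT.X (j₂ + 2 * (d + 2)),
      [Symbol.nonterminal NT.W, Symbol.nonterminal (NT.Wl (j₂ + 2 * (d + 2)))]⟩}

/-- S- and T-rules of `G'`:  `S → W T` and `T → C_{p,q} W` for all `0 ≤ p, q ≤ d²`. -/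
def STRules (d : ℕ) : Set (ContextFreeRule ℕ NT) :=
  {r | r = ⟨NT.S, [Symbol.nonterminal NT.W, Symbol.nonterminal NT.T]⟩ ∨
    ∃ p q, p ≤ d ^ 2 ∧ q ≤ d ^ 2 ∧
      r = ⟨NT.T, [Symbol.nonterminal (NT.C p q), Symbol.nonterminal NT.W]⟩}

/-- The production set of the Chomsky-normal-form grammar `G'` of the reduction. -/
def RulesG' (m d : ℕ) (a b : ℕ → ℕ → ℕ) : Set (ContextFreeRule ℕ NT) :=
  WRules' d ∪ ARules' m d a ∪ XRules₁ d ∪ BRules' m d b ∪ XRules₂ d ∪ CRules d ∪ STRules d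

/-- The size of a grammar: the sum of the lengths of all its productions
(a production `A → α` has length `1 + |α|`). -/
noncomputable def gsize (R : Set (ContextFreeRule ℕ NT)) : ℕ :=
  ∑ᶠ r ∈ R, (1 + r.output.length)

/-- The set of nonterminals occurring in a rule set. -/
def ntsOf (R : Set (ContextFreeRule ℕ NT)) : Set NT :=
  {n | ∃ r ∈ R, r.input = n ∨ Symbol.nonterminal n ∈ r.output}

/-! ### Auxiliary machinery -/

section Aux

/-- Helper: a set contained in the image of a finset is finite and its
cardinality is bounded by the finset's. -/
lemma bound_of_subset_image {α β : Type*} (f : α → β) (s : Finset α) {t : Set β}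
    (h : t ⊆ f '' ↑s) : t.Finite ∧ t.ncard ≤ s.card := by
  have hfin : (f '' (↑s : Set α)).Finite := s.finite_toSet.image f
  refine ⟨hfin.subset h, ?_⟩
  calc t.ncard ≤ (f '' ↑s).ncard := Set.ncard_le_ncard h hfin
    _ ≤ (↑s : Set α).ncard := Set.ncard_image_le s.finite_toSet
    _ = s.card := Set.ncard_coe_finset s

lemma WRules'_bound (d : ℕ) : (WRules' d).Finite ∧ (WRules' d).ncard ≤ 9 * d + 18 := by
  have hsub : WRules' d ⊆
      (fun p : ℕ × ℕ => if p.2 = 0 then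
        (⟨NT.W, [Symbol.nonterminal (NT.Wl p.1), Symbol.nonterminal NT.W]⟩ : ContextFreeRule ℕ NT)
      else if p.2 = 1 then ⟨NT.W, [Symbol.terminal p.1]⟩ else ⟨NT.Wl p.1, [Symbol.terminal p.1]⟩)
      '' ↑(Finset.Icc 1 (3 * d + 6) ×ˢ Finset.range 3) := by
    rintro r ⟨l, h1, h2, hc | hc | hc⟩
    · exact ⟨(l, 0), by simp [h1, h2], by simp [hc]⟩
    · exact ⟨(l, 1), by simp [h1, h2], by simp [hc]⟩
    · exact ⟨(l, 2), by simp [h1, h2], by simp [hc]⟩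
  have h := bound_of_subset_image _ _ hsub
  refine ⟨h.1, h.2.trans ?_⟩
  simp [Nat.card_Icc]
  omega

lemma WRules_bound (d : ℕ) : (WRules d).Finite := by
  have hsub : WRules d ⊆
      (fun p : ℕ × ℕ => if p.2 = 0 then
        (⟨NT.W, [Symbol.terminal p.1, Symbol.nonterminal NT.W]⟩ : ContextFreeRule ℕ NT)
      else ⟨NT.W, [Symbol.terminal p.1]⟩)
      '' ↑(Finset.Icc 1 (3 * d + 6) ×ˢ Finset.range 3) := by
    rintro r ⟨l, h1, h2, hc | hc⟩
    · exact ⟨(l, 0), by simp [h1, h2], by simp [hc]⟩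
    · exact ⟨(l, 1), by simp [h1, h2], by simp [hc]⟩
  exact (bound_of_subset_image _ _ hsub).1

lemma ARules'_bound (m d : ℕ) (a : ℕ → ℕ → ℕ) :
    (ARules' m d a).Finite ∧ (ARules' m d a).ncard ≤ m * m := by
  have hsub : ARules' m d a ⊆
      (fun p : ℕ × ℕ => (⟨NT.A (p.1 / d) (p.2 / d),
        [Symbol.nonterminal (NT.Wl (p.1 % d + 2)),
         Symbol.nonterminal (NT.X (p.2 % d + 2 + (d + 2)))]⟩ : ContextFreeRule ℕ NT))
      '' ↑(Finset.Icc 1 m ×ˢ Finset.Icc 1 m) := by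
    rintro r ⟨i, j, hi1, hi2, hj1, hj2, _, hc⟩
    exact ⟨(i, j), by simp only [Finset.coe_product, Set.mem_prod, Finset.mem_coe, Finset.mem_Icc]; exact ⟨⟨hi1, hi2⟩, hj1, hj2⟩, by simp [hc]⟩
  have h := bound_of_subset_image _ _ hsub
  refine ⟨h.1, h.2.trans ?_⟩
  simp [Nat.card_Icc]

lemma BRules'_bound (m d : ℕ) (b : ℕ → ℕ → ℕ) :
    (BRules' m d b).Finite ∧ (BRules' m d b).ncard ≤ m * m := by
  have hsub : BRules' m d b ⊆
      (fun p : ℕ × ℕ => (⟨NT.B (p.1 / d) (p.2 / d),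
        [Symbol.nonterminal (NT.Wl (p.1 % d + 2 + 1 + (d + 2))),
         Symbol.nonterminal (NT.X (p.2 % d + 2 + 2 * (d + 2)))]⟩ : ContextFreeRule ℕ NT))
      '' ↑(Finset.Icc 1 m ×ˢ Finset.Icc 1 m) := by
    rintro r ⟨i, j, hi1, hi2, hj1, hj2, _, hc⟩
    exact ⟨(i, j), by simp only [Finset.coe_product, Set.mem_prod, Finset.mem_coe, Finset.mem_Icc]; exact ⟨⟨hi1, hi2⟩, hj1, hj2⟩, by simp [hc]⟩
  have h := bound_of_subset_image _ _ hsub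
  refine ⟨h.1, h.2.trans ?_⟩
  simp [Nat.card_Icc]

lemma ARules_bound (m d : ℕ) (a : ℕ → ℕ → ℕ) : (ARules m d a).Finite := by
  have hsub : ARules m d a ⊆
      (fun p : ℕ × ℕ => (⟨NT.A (p.1 / d) (p.2 / d),
        [Symbol.terminal (p.1 % d + 2), Symbol.nonterminal NT.W,
         Symbol.terminal (p.2 % d + 2 + (d + 2))]⟩ : ContextFreeRule ℕ NT))
      '' ↑(Finset.Icc 1 m ×ˢ Finset.Icc 1 m) := by
    rintro r ⟨i, j, hi1, hi2, hj1, hj2, _, hc⟩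
    exact ⟨(i, j), by simp only [Finset.coe_product, Set.mem_prod, Finset.mem_coe, Finset.mem_Icc]; exact ⟨⟨hi1, hi2⟩, hj1, hj2⟩, by simp [hc]⟩
  exact (bound_of_subset_image _ _ hsub).1

lemma BRules_bound (m d : ℕ) (b : ℕ → ℕ → ℕ) : (BRules m d b).Finite := by
  have hsub : BRules m d b ⊆
      (fun p : ℕ × ℕ => (⟨NT.B (p.1 / d) (p.2 / d),
        [Symbol.terminal (p.1 % d + 2 + 1 + (d + 2)), Symbol.nonterminal NT.W,
         Symbol.terminal (p.2 % d + 2 + 2 * (d + 2))]⟩ : ContextFreeRule ℕ NT))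
      '' ↑(Finset.Icc 1 m ×ˢ Finset.Icc 1 m) := by
    rintro r ⟨i, j, hi1, hi2, hj1, hj2, _, hc⟩
    exact ⟨(i, j), by simp only [Finset.coe_product, Set.mem_prod, Finset.mem_coe, Finset.mem_Icc]; exact ⟨⟨hi1, hi2⟩, hj1, hj2⟩, by simp [hc]⟩
  exact (bound_of_subset_image _ _ hsub).1

lemma CRules_bound (d : ℕ) : (CRules d).Finite ∧ (CRules d).ncard ≤ (d ^ 2 + 1) ^ 3 := by
  have hsub : CRules d ⊆
      (fun p : ℕ × ℕ × ℕ => (⟨NT.C p.1 p.2.1,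
        [Symbol.nonterminal (NT.A p.1 p.2.2), Symbol.nonterminal (NT.B p.2.2 p.2.1)]⟩ :
          ContextFreeRule ℕ NT))
      '' ↑(Finset.Iic (d ^ 2) ×ˢ Finset.Iic (d ^ 2) ×ˢ Finset.Iic (d ^ 2)) := by
    rintro r ⟨p, q, t, hp, hq, ht, hc⟩
    exact ⟨(p, q, t), by simp [hp, hq, ht], by simp [hc]⟩
  have h := bound_of_subset_image _ _ hsub
  refine ⟨h.1, h.2.trans ?_⟩
  simp [Nat.card_Iic]
  ring_nf
  omega

lemma XRules₁_bound (d : ℕ) : (XRules₁ d).Finite ∧ (XRules₁ d).ncard ≤ d := by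
  have hsub : XRules₁ d ⊆
      (fun j : ℕ => (⟨NT.X (j + (d + 2)),
        [Symbol.nonterminal NT.W, Symbol.nonterminal (NT.Wl (j + (d + 2)))]⟩ :
          ContextFreeRule ℕ NT)) '' ↑(Finset.Icc 2 (d + 1)) := by
    rintro r ⟨j, h1, h2, hc⟩
    exact ⟨j, by simp [h1, h2], by simp [hc]⟩
  have h := bound_of_subset_image _ _ hsub
  refine ⟨h.1, h.2.trans ?_⟩
  simp [Nat.card_Icc]

lemma XRules₂_bound (d : ℕ) : (XRules₂ d).Finite ∧ (XRules₂ d).ncard ≤ d := by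
  have hsub : XRules₂ d ⊆
      (fun j : ℕ => (⟨NT.X (j + 2 * (d + 2)),
        [Symbol.nonterminal NT.W, Symbol.nonterminal (NT.Wl (j + 2 * (d + 2)))]⟩ :
          ContextFreeRule ℕ NT)) '' ↑(Finset.Icc 2 (d + 1)) := by
    rintro r ⟨j, h1, h2, hc⟩
    exact ⟨j, by simp [h1, h2], by simp [hc]⟩
  have h := bound_of_subset_image _ _ hsub
  refine ⟨h.1, h.2.trans ?_⟩
  simp [Nat.card_Icc]

lemma STRules_bound (d : ℕ) :
    (STRules d).Finite ∧ (STRules d).ncard ≤ 2 * (d ^ 2 + 1) ^ 2 := by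
  have hsub : STRules d ⊆
      (fun p : ℕ × ℕ × ℕ => if p.1 = 0 then
        (⟨NT.S, [Symbol.nonterminal NT.W, Symbol.nonterminal NT.T]⟩ : ContextFreeRule ℕ NT)
      else ⟨NT.T, [Symbol.nonterminal (NT.C p.2.1 p.2.2), Symbol.nonterminal NT.W]⟩)
      '' ↑(Finset.range 2 ×ˢ Finset.Iic (d ^ 2) ×ˢ Finset.Iic (d ^ 2)) := by
    rintro r (hc | ⟨p, q, hp, hq, hc⟩)
    · exact ⟨(0, 0, 0), by simp, by simp [hc]⟩
    · exact ⟨(1, p, q), by simp [hp, hq], by simp [hc]⟩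
  have h := bound_of_subset_image _ _ hsub
  refine ⟨h.1, h.2.trans ?_⟩
  simp [Nat.card_Iic]
  ring_nf
  omega

lemma SRules_bound (d : ℕ) : (SRules d).Finite := by
  have hsub : SRules d ⊆
      (fun p : ℕ × ℕ => (⟨NT.S, [Symbol.nonterminal NT.W, Symbol.nonterminal (NT.C p.1 p.2),
        Symbol.nonterminal NT.W]⟩ : ContextFreeRule ℕ NT))
      '' ↑(Finset.Iic (d ^ 2) ×ˢ Finset.Iic (d ^ 2)) := by
    rintro r ⟨p, q, hp, hq, hc⟩
    exact ⟨(p, q), by simp [hp, hq], by simp [hc]⟩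
  exact (bound_of_subset_image _ _ hsub).1

end Aux

section Aux2

/-- T-rules of `G'`. -/
def TRules (d : ℕ) : Set (ContextFreeRule ℕ NT) :=
  {r | ∃ p q, p ≤ d ^ 2 ∧ q ≤ d ^ 2 ∧
    r = ⟨NT.T, [Symbol.nonterminal (NT.C p q), Symbol.nonterminal NT.W]⟩}

lemma TRules_bound (d : ℕ) : (TRules d).Finite := by
  have hsub : TRules d ⊆
      (fun p : ℕ × ℕ => (⟨NT.T, [Symbol.nonterminal (NT.C p.1 p.2),
        Symbol.nonterminal NT.W]⟩ : ContextFreeRule ℕ NT))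
      '' ↑(Finset.Iic (d ^ 2) ×ˢ Finset.Iic (d ^ 2)) := by
    rintro r ⟨p, q, hp, hq, hc⟩
    exact ⟨(p, q), by simp [hp, hq], by simp [hc]⟩
  exact (bound_of_subset_image _ _ hsub).1

/-- Conversion of the core CNF rules back to rules of `G`. -/
def conv : ContextFreeRule ℕ NT → ContextFreeRule ℕ NT := fun r =>
  match r with
  | ⟨n, [Symbol.nonterminal (NT.Wl u), Symbol.nonterminal (NT.X v)]⟩ =>
      ⟨n, [Symbol.terminal u, Symbol.nonterminal NT.W, Symbol.terminal v]⟩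
  | ⟨NT.T, [Symbol.nonterminal (NT.C p q), Symbol.nonterminal NT.W]⟩ =>
      ⟨NT.S, [Symbol.nonterminal NT.W, Symbol.nonterminal (NT.C p q), Symbol.nonterminal NT.W]⟩
  | r => r

/-- Left inverse of `conv` on the core rules. -/
def unconv : ContextFreeRule ℕ NT → ContextFreeRule ℕ NT := fun r =>
  match r with
  | ⟨n, [Symbol.terminal u, Symbol.nonterminal NT.W, Symbol.terminal v]⟩ =>
      ⟨n, [Symbol.nonterminal (NT.Wl u), Symbol.nonterminal (NT.X v)]⟩
  | ⟨NT.S, [Symbol.nonterminal NT.W, Symbol.nonterminal (NT.C p q), Symbol.nonterminal NT.W]⟩ =>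
      ⟨NT.T, [Symbol.nonterminal (NT.C p q), Symbol.nonterminal NT.W]⟩
  | r => r

lemma unconv_conv {m d : ℕ} {a b : ℕ → ℕ → ℕ} {r : ContextFreeRule ℕ NT}
    (hr : r ∈ ARules' m d a ∪ BRules' m d b ∪ CRules d ∪ TRules d) :
    unconv (conv r) = r := by
  rcases hr with ((⟨i, j, _, _, _, _, _, rfl⟩ | ⟨i, j, _, _, _, _, _, rfl⟩) |
    ⟨p, q, t, _, _, _, rfl⟩) | ⟨p, q, _, _, rfl⟩ <;> rfl

lemma conv_injOn (m d : ℕ) (a b : ℕ → ℕ → ℕ) :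
    Set.InjOn conv (ARules' m d a ∪ BRules' m d b ∪ CRules d ∪ TRules d) := by
  intro x hx y hy hxy
  rw [← unconv_conv (m := m) (a := a) (b := b) hx,
    ← unconv_conv (m := m) (a := a) (b := b) hy, hxy]

lemma conv_maps (m d : ℕ) (a b : ℕ → ℕ → ℕ) :
    conv '' (ARules' m d a ∪ BRules' m d b ∪ CRules d ∪ TRules d) ⊆ RulesG m d a b := by
  rintro _ ⟨r, hr, rfl⟩
  rcases hr with ((⟨i, j, hi1, hi2, hj1, hj2, ha, rfl⟩ | ⟨i, j, hi1, hi2, hj1, hj2, hb, rfl⟩) |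
    ⟨p, q, t, hp, hq, ht, rfl⟩) | ⟨p, q, hp, hq, rfl⟩
  · exact Or.inl (Or.inl (Or.inl (Or.inr ⟨i, j, hi1, hi2, hj1, hj2, ha, rfl⟩)))
  · exact Or.inl (Or.inl (Or.inr ⟨i, j, hi1, hi2, hj1, hj2, hb, rfl⟩))
  · exact Or.inl (Or.inr ⟨p, q, t, hp, hq, ht, rfl⟩)
  · exact Or.inr ⟨p, q, hp, hq, rfl⟩

lemma mem_ntsOf {R : Set (ContextFreeRule ℕ NT)} {r : ContextFreeRule ℕ NT} {n : NT}
    (hr : r ∈ R) (h : r.input = n ∨ Symbol.nonterminal n ∈ r.output) : n ∈ ntsOf R :=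
  ⟨r, hr, h⟩

lemma ntsOf_finite {R : Set (ContextFreeRule ℕ NT)} (hR : R.Finite) : (ntsOf R).Finite := by
  have hsub : ntsOf R ⊆ ⋃ r ∈ R, ({r.input} ∪ {n | Symbol.nonterminal n ∈ r.output}) := by
    rintro n ⟨r, hr, h | h⟩
    · exact Set.mem_biUnion hr (Or.inl (by simp [h]))
    · exact Set.mem_biUnion hr (Or.inr h)
  refine Set.Finite.subset (Set.Finite.biUnion hR fun r _ => ?_) hsub
  refine (Set.finite_singleton _).union ?_
  have hsub2 : {n | Symbol.nonterminal n ∈ r.output} ⊆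
      (fun s : Sym => match s with | Symbol.nonterminal n => n | _ => NT.S) ''
        {s | s ∈ r.output} := fun n hn => ⟨Symbol.nonterminal n, hn, rfl⟩
  exact Set.Finite.subset ((r.output.finite_toSet).image _) hsub2

lemma gsize_le_three_ncard {R : Set (ContextFreeRule ℕ NT)} (hR : R.Finite)
    (h : ∀ r ∈ R, r.output.length ≤ 2) : gsize R ≤ 3 * R.ncard := by
  rw [gsize, finsum_mem_eq_finite_toFinset_sum _ hR]
  have hcard : R.ncard = hR.toFinset.card := Set.ncard_eq_toFinset_card R hR
  calc ∑ r ∈ hR.toFinset, (1 + r.output.length)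
      ≤ ∑ _r ∈ hR.toFinset, 3 :=
        Finset.sum_le_sum fun r hr => by have := h r (hR.mem_toFinset.mp hr); omega
    _ = hR.toFinset.card * 3 := Finset.sum_const 3
    _ = 3 * R.ncard := by rw [hcard]; ring

lemma output_len (m d : ℕ) (a b : ℕ → ℕ → ℕ) :
    ∀ r ∈ RulesG' m d a b, r.output.length ≤ 2 := by
  rintro r ((((((⟨l, _, _, hc | hc | hc⟩ | ⟨i, j, _, _, _, _, _, hc⟩) | ⟨j, _, _, hc⟩) |
    ⟨i, j, _, _, _, _, _, hc⟩) | ⟨j, _, _, hc⟩) | ⟨p, q, t, _, _, _, hc⟩) |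
    (hc | ⟨p, q, _, _, hc⟩)) <;> subst hc <;> simp

end Aux2

section Aux3

lemma nts_subset (m d : ℕ) (hd1 : 1 ≤ d) (a b : ℕ → ℕ → ℕ) :
    ntsOf (RulesG' m d a b) ⊆ ntsOf (RulesG m d a b) ∪
      (({NT.T} ∪ NT.Wl '' ↑(Finset.Icc 1 (3 * d + 6))) ∪
        NT.X '' ↑(Finset.Iic (3 * d + 9))) := by
  have hWG : (⟨NT.W, [Symbol.terminal 1]⟩ : ContextFreeRule ℕ NT) ∈ RulesG m d a b :=
    Or.inl (Or.inl (Or.inl (Or.inl ⟨1, le_refl 1, by omega, Or.inr rfl⟩)))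
  have hWmem : NT.W ∈ ntsOf (RulesG m d a b) := mem_ntsOf hWG (Or.inl rfl)
  have hWl : ∀ u : ℕ, 1 ≤ u → u ≤ 3 * d + 6 →
      NT.Wl u ∈ ntsOf (RulesG m d a b) ∪
        (({NT.T} ∪ NT.Wl '' ↑(Finset.Icc 1 (3 * d + 6))) ∪
          NT.X '' ↑(Finset.Iic (3 * d + 9))) := by
    intro u h1 h2
    exact Or.inr (Or.inl (Or.inr ⟨u, by simp [h1, h2], rfl⟩))
  have hX : ∀ v : ℕ, v ≤ 3 * d + 9 →
      NT.X v ∈ ntsOf (RulesG m d a b) ∪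
        (({NT.T} ∪ NT.Wl '' ↑(Finset.Icc 1 (3 * d + 6))) ∪
          NT.X '' ↑(Finset.Iic (3 * d + 9))) := by
    intro v h2
    exact Or.inr (Or.inr ⟨v, by simp [h2], rfl⟩)
  rintro n ⟨r, ((((((⟨l, hl1, hl2, hc | hc | hc⟩ | ⟨i, j, hi1, hi2, hj1, hj2, ha, hc⟩) |
    ⟨j, hj1, hj2, hc⟩) | ⟨i, j, hi1, hi2, hj1, hj2, hb, hc⟩) | ⟨j, hj1, hj2, hc⟩) |
    ⟨p, q, t, hp, hq, ht, hc⟩) | (hc | ⟨p, q, hp, hq, hc⟩)), hn⟩ <;> subst hc <;>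
    simp only [ntsOf, List.mem_cons, List.mem_singleton, List.not_mem_nil, or_false,
      Set.mem_setOf_eq] at hn
  · -- W → Wl l W
    rcases hn with rfl | h | h
    · exact Or.inl hWmem
    · obtain rfl : n = NT.Wl l := by cases h; rfl
      exact hWl l hl1 hl2
    · obtain rfl : n = NT.W := by cases h; rfl
      exact Or.inl hWmem
  · -- W → w l
    rcases hn with rfl | h
    · exact Or.inl hWmem
    · cases h
  · -- Wl l → w l
    rcases hn with rfl | h
    · exact hWl l hl1 hl2
    · cases h
  · -- A rule
    have hmodi : i % d < d := Nat.mod_lt _ hd1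
    have hmodj : j % d < d := Nat.mod_lt _ hd1
    rcases hn with rfl | h | h
    · exact Or.inl (mem_ntsOf (Or.inl (Or.inl (Or.inl (Or.inr
        ⟨i, j, hi1, hi2, hj1, hj2, ha, rfl⟩)))) (Or.inl rfl))
    · obtain rfl : n = NT.Wl (i % d + 2) := by cases h; rfl
      exact hWl _ (by omega) (by omega)
    · obtain rfl : n = NT.X (j % d + 2 + (d + 2)) := by cases h; rfl
      exact hX _ (by omega)
  · -- X₁ rule
    rcases hn with rfl | h | h
    · exact hX _ (by omega)
    · obtain rfl : n = NT.W := by cases h; rfl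
      exact Or.inl hWmem
    · obtain rfl : n = NT.Wl (j + (d + 2)) := by cases h; rfl
      exact hWl _ (by omega) (by omega)
  · -- B rule
    have hmodi : i % d < d := Nat.mod_lt _ hd1
    have hmodj : j % d < d := Nat.mod_lt _ hd1
    rcases hn with rfl | h | h
    · exact Or.inl (mem_ntsOf (Or.inl (Or.inl (Or.inr
        ⟨i, j, hi1, hi2, hj1, hj2, hb, rfl⟩))) (Or.inl rfl))
    · obtain rfl : n = NT.Wl (i % d + 2 + 1 + (d + 2)) := by cases h; rfl
      exact hWl _ (by omega) (by omega)
    · obtain rfl : n = NT.X (j % d + 2 + 2 * (d + 2)) := by cases h; rfl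
      exact hX _ (by omega)
  · -- X₂ rule
    rcases hn with rfl | h | h
    · exact hX _ (by omega)
    · obtain rfl : n = NT.W := by cases h; rfl
      exact Or.inl hWmem
    · obtain rfl : n = NT.Wl (j + 2 * (d + 2)) := by cases h; rfl
      exact hWl _ (by omega) (by omega)
  · -- C rule
    have hC : (⟨NT.C p q, [Symbol.nonterminal (NT.A p t), Symbol.nonterminal (NT.B t q)]⟩ :
        ContextFreeRule ℕ NT) ∈ RulesG m d a b :=
      Or.inl (Or.inr ⟨p, q, t, hp, hq, ht, rfl⟩)
    rcases hn with rfl | h | h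
    · exact Or.inl (mem_ntsOf hC (Or.inl rfl))
    · obtain rfl : n = NT.A p t := by cases h; rfl
      exact Or.inl (mem_ntsOf hC (Or.inr (by simp)))
    · obtain rfl : n = NT.B t q := by cases h; rfl
      exact Or.inl (mem_ntsOf hC (Or.inr (by simp)))
  · -- S → W T
    have hS : (⟨NT.S, [Symbol.nonterminal NT.W, Symbol.nonterminal (NT.C 0 0),
        Symbol.nonterminal NT.W]⟩ : ContextFreeRule ℕ NT) ∈ RulesG m d a b :=
      Or.inr ⟨0, 0, Nat.zero_le _, Nat.zero_le _, rfl⟩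
    rcases hn with rfl | h | h
    · exact Or.inl (mem_ntsOf hS (Or.inl rfl))
    · obtain rfl : n = NT.W := by cases h; rfl
      exact Or.inl hWmem
    · obtain rfl : n = NT.T := by cases h; rfl
      exact Or.inr (Or.inl (Or.inl rfl))
  · -- T → C W
    have hS : (⟨NT.S, [Symbol.nonterminal NT.W, Symbol.nonterminal (NT.C p q),
        Symbol.nonterminal NT.W]⟩ : ContextFreeRule ℕ NT) ∈ RulesG m d a b :=
      Or.inr ⟨p, q, hp, hq, rfl⟩
    rcases hn with rfl | h | h
    · exact Or.inr (Or.inl (Or.inl rfl))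
    · obtain rfl : n = NT.C p q := by cases h; rfl
      exact Or.inl (mem_ntsOf hS (Or.inr (by simp)))
    · obtain rfl : n = NT.W := by cases h; rfl
      exact Or.inl hWmem

end Aux3

/-- The CNF grammar `G'` also has size `O(m²)`, and it has only `O(d)` more
productions and nonterminals than the grammar `G` it is converted from, where
`d = ⌈m^(1/3)⌉`. -/
theorem grammarCNF_size_quadratic :
    ∃ c : ℕ, ∀ m : ℕ, 1 ≤ m → ∀ a b : ℕ → ℕ → ℕ,
      (∀ i j, a i j = 0 ∨ a i j = 1) → (∀ i j, b i j = 0 ∨ b i j = 1) →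
      gsize (RulesG' m (dOf m) a b) ≤ c * m ^ 2 ∧
      (RulesG' m (dOf m) a b).ncard ≤ (RulesG m (dOf m) a b).ncard + c * dOf m ∧
      (ntsOf (RulesG' m (dOf m) a b)).ncard ≤
        (ntsOf (RulesG m (dOf m) a b)).ncard + c * dOf m := by
  refine ⟨6000, fun m hm a b ha hb => ?_⟩
  set d := dOf m with hddef
  have hm0 : (0 : ℝ) < (m : ℝ) := by exact_mod_cast hm
  have hx0 : (0 : ℝ) < (m : ℝ) ^ ((1 : ℝ) / 3) := Real.rpow_pos_of_pos hm0 _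
  have hd1 : 1 ≤ d := by
    have : 0 < d := Nat.ceil_pos.mpr hx0
    omega
  have hd3 : d ^ 3 ≤ 8 * m := by
    obtain ⟨e, he⟩ : ∃ e, d = e + 1 := ⟨d - 1, by omega⟩
    have hlt : (e : ℝ) < (m : ℝ) ^ ((1 : ℝ) / 3) := by
      have h' : e < d := by omega
      exact Nat.lt_ceil.mp h'
    have hcube : ((e : ℝ)) ^ (3 : ℕ) < ((m : ℝ) ^ ((1 : ℝ) / 3)) ^ (3 : ℕ) :=
      pow_lt_pow_left₀ hlt (by positivity) (by norm_num)
    have hxm : ((m : ℝ) ^ ((1 : ℝ) / 3)) ^ (3 : ℕ) = (m : ℝ) := by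
      rw [← Real.rpow_natCast ((m : ℝ) ^ ((1 : ℝ) / 3)) 3,
        ← Real.rpow_mul (le_of_lt hm0)]
      norm_num
    have hem : e ^ 3 < m := by exact_mod_cast hxm ▸ hcube
    rcases Nat.eq_zero_or_pos e with rfl | he1
    · rw [he]; norm_num; omega
    · rw [he]; nlinarith [hem, he1]
  clear_value d
  clear hddef
  have hdd3 : d ≤ d ^ 3 := Nat.le_self_pow (by norm_num) d
  have h8 : d ≤ 8 * m := hdd3.trans hd3
  have h66 : d ^ 6 ≤ 64 * m ^ 2 := by nlinarith [hd3]
  have h46 : d ^ 4 ≤ d ^ 6 := Nat.pow_le_pow_right hd1 (by norm_num)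
  have h26 : d ^ 2 ≤ d ^ 6 := Nat.pow_le_pow_right hd1 (by norm_num)
  have h06 : 1 ≤ d ^ 6 := Nat.one_le_pow _ _ (by omega)
  have hm2 : m ≤ m ^ 2 := by nlinarith [hm]
  have hp4 : (d ^ 2 + 1) ^ 3 ≤ 512 * m ^ 2 := by nlinarith [h66, h46, h26, h06]
  have hp5 : 2 * (d ^ 2 + 1) ^ 2 ≤ 512 * m ^ 2 := by nlinarith [h66, h46, h26, h06]
  have hnum : (9 * d + 18) + m * m + d + m * m + d + (d ^ 2 + 1) ^ 3 + 2 * (d ^ 2 + 1) ^ 2 ≤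
      2000 * m ^ 2 := by nlinarith [h8, hm2, hm, hp4, hp5]
  obtain ⟨fW, cW⟩ := WRules'_bound d
  obtain ⟨fA, cA⟩ := ARules'_bound m d a
  obtain ⟨fX1, cX1⟩ := XRules₁_bound d
  obtain ⟨fB, cB⟩ := BRules'_bound m d b
  obtain ⟨fX2, cX2⟩ := XRules₂_bound d
  obtain ⟨fC, cC⟩ := CRules_bound d
  obtain ⟨fST, cST⟩ := STRules_bound d
  have fT := TRules_bound d
  have fG : (RulesG m d a b).Finite :=
    (((((WRules_bound d).union (ARules_bound m d a)).union
      (BRules_bound m d b)).union fC).union (SRules_bound d))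
  have fG' : (RulesG' m d a b).Finite :=
    (((((fW.union fA).union fX1).union fB).union fX2).union fC).union fST
  have hcnt : (RulesG' m d a b).ncard ≤
      (9 * d + 18) + m * m + d + m * m + d + (d ^ 2 + 1) ^ 3 + 2 * (d ^ 2 + 1) ^ 2 := by
    show (WRules' d ∪ ARules' m d a ∪ XRules₁ d ∪ BRules' m d b ∪ XRules₂ d ∪ CRules d ∪
      STRules d).ncard ≤ _
    refine le_trans (Set.ncard_union_le _ _) (add_le_add ?_ cST)
    refine le_trans (Set.ncard_union_le _ _) (add_le_add ?_ cC)
    refine le_trans (Set.ncard_union_le _ _) (add_le_add ?_ cX2)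
    refine le_trans (Set.ncard_union_le _ _) (add_le_add ?_ cB)
    refine le_trans (Set.ncard_union_le _ _) (add_le_add ?_ cX1)
    exact le_trans (Set.ncard_union_le _ _) (add_le_add cW cA)
  refine ⟨?_, ?_, ?_⟩
  · calc gsize (RulesG' m d a b) ≤ 3 * (RulesG' m d a b).ncard :=
        gsize_le_three_ncard fG' (output_len m d a b)
      _ ≤ 3 * (2000 * m ^ 2) := Nat.mul_le_mul_left 3 (hcnt.trans hnum)
      _ = 6000 * m ^ 2 := by ring
  · -- number of productions
    have hsub2 : RulesG' m d a b ⊆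
        (ARules' m d a ∪ BRules' m d b ∪ CRules d ∪ TRules d) ∪
        (WRules' d ∪ XRules₁ d ∪ XRules₂ d ∪
          {⟨NT.S, [Symbol.nonterminal NT.W, Symbol.nonterminal NT.T]⟩}) := by
      rintro r ((((((hW | hA) | hX1) | hB) | hX2) | hC) | hST)
      · exact Or.inr (Or.inl (Or.inl (Or.inl hW)))
      · exact Or.inl (Or.inl (Or.inl (Or.inl hA)))
      · exact Or.inr (Or.inl (Or.inl (Or.inr hX1)))
      · exact Or.inl (Or.inl (Or.inl (Or.inr hB)))
      · exact Or.inr (Or.inl (Or.inr hX2))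
      · exact Or.inl (Or.inl (Or.inr hC))
      · rcases hST with hS | hT
        · exact Or.inr (Or.inr hS)
        · exact Or.inl (Or.inr hT)
    have fCore : (ARules' m d a ∪ BRules' m d b ∪ CRules d ∪ TRules d).Finite :=
      ((fA.union fB).union fC).union fT
    have fSmall : (WRules' d ∪ XRules₁ d ∪ XRules₂ d ∪
        {(⟨NT.S, [Symbol.nonterminal NT.W, Symbol.nonterminal NT.T]⟩ :
          ContextFreeRule ℕ NT)}).Finite :=
      ((fW.union fX1).union fX2).union (Set.finite_singleton _)
    have hcore : (ARules' m d a ∪ BRules' m d b ∪ CRules d ∪ TRules d).ncard ≤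
        (RulesG m d a b).ncard := by
      rw [← Set.ncard_image_of_injOn (conv_injOn m d a b)]
      exact Set.ncard_le_ncard (conv_maps m d a b) fG
    have hsmall : (WRules' d ∪ XRules₁ d ∪ XRules₂ d ∪
        {(⟨NT.S, [Symbol.nonterminal NT.W, Symbol.nonterminal NT.T]⟩ :
          ContextFreeRule ℕ NT)}).ncard ≤ 9 * d + 18 + d + d + 1 := by
      refine le_trans (Set.ncard_union_le _ _) (add_le_add ?_ (by simp))
      refine le_trans (Set.ncard_union_le _ _) (add_le_add ?_ cX2)
      exact le_trans (Set.ncard_union_le _ _) (add_le_add cW cX1)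
    calc (RulesG' m d a b).ncard
        ≤ ((ARules' m d a ∪ BRules' m d b ∪ CRules d ∪ TRules d) ∪
          (WRules' d ∪ XRules₁ d ∪ XRules₂ d ∪
            {⟨NT.S, [Symbol.nonterminal NT.W, Symbol.nonterminal NT.T]⟩})).ncard :=
          Set.ncard_le_ncard hsub2 (fCore.union fSmall)
      _ ≤ (ARules' m d a ∪ BRules' m d b ∪ CRules d ∪ TRules d).ncard +
          (WRules' d ∪ XRules₁ d ∪ XRules₂ d ∪
            {⟨NT.S, [Symbol.nonterminal NT.W, Symbol.nonterminal NT.T]⟩}).ncard :=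
          Set.ncard_union_le _ _
      _ ≤ (RulesG m d a b).ncard + (9 * d + 18 + d + d + 1) := add_le_add hcore hsmall
      _ ≤ (RulesG m d a b).ncard + 6000 * d := by
          have := hd1; omega
  · -- number of nonterminals
    have hE : ((({NT.T} : Set NT) ∪ NT.Wl '' ↑(Finset.Icc 1 (3 * d + 6))) ∪
        NT.X '' ↑(Finset.Iic (3 * d + 9))).ncard ≤ 1 + (3 * d + 6) + (3 * d + 10) := by
      refine le_trans (Set.ncard_union_le _ _) (add_le_add ?_ ?_)
      · refine le_trans (Set.ncard_union_le _ _) (add_le_add (by simp) ?_)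
        calc (NT.Wl '' ↑(Finset.Icc 1 (3 * d + 6))).ncard
            ≤ (↑(Finset.Icc 1 (3 * d + 6)) : Set ℕ).ncard :=
              Set.ncard_image_le (Finset.finite_toSet _)
          _ = (Finset.Icc 1 (3 * d + 6)).card := Set.ncard_coe_finset _
          _ = 3 * d + 6 := by simp [Nat.card_Icc]
      · calc (NT.X '' ↑(Finset.Iic (3 * d + 9))).ncard
            ≤ (↑(Finset.Iic (3 * d + 9)) : Set ℕ).ncard :=
              Set.ncard_image_le (Finset.finite_toSet _)
          _ = (Finset.Iic (3 * d + 9)).card := Set.ncard_coe_finset _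
          _ = 3 * d + 10 := by simp [Nat.card_Iic]
    have fE : ((({NT.T} : Set NT) ∪ NT.Wl '' ↑(Finset.Icc 1 (3 * d + 6))) ∪
        NT.X '' ↑(Finset.Iic (3 * d + 9))).Finite :=
      ((Set.finite_singleton _).union ((Finset.finite_toSet _).image _)).union
        ((Finset.finite_toSet _).image _)
    have fntsG : (ntsOf (RulesG m d a b)).Finite := ntsOf_finite fG
    calc (ntsOf (RulesG' m d a b)).ncard
        ≤ (ntsOf (RulesG m d a b) ∪ ((({NT.T} : Set NT) ∪
            NT.Wl '' ↑(Finset.Icc 1 (3 * d + 6))) ∪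
            NT.X '' ↑(Finset.Iic (3 * d + 9)))).ncard :=
          Set.ncard_le_ncard (nts_subset m d hd1 a b) (fntsG.union fE)
      _ ≤ (ntsOf (RulesG m d a b)).ncard + ((({NT.T} : Set NT) ∪
            NT.Wl '' ↑(Finset.Icc 1 (3 * d + 6))) ∪
            NT.X '' ↑(Finset.Iic (3 * d + 9))).ncard := Set.ncard_union_le _ _
      _ ≤ (ntsOf (RulesG m d a b)).ncard + (1 + (3 * d + 6) + (3 * d + 10)) :=
          Nat.add_le_add_left hE _
      _ ≤ (ntsOf (RulesG m d a b)).ncard + 6000 * d := by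
          have := hd1; omega

end CFGBMM
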